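/- Let G be a connected graph and for each edge e let t(e) be the number of triangles containing e. Then for every edge e = uv: n_u(e) + n_v(e) ≤ n − t(e) and deg(u) + deg(v) ≤ n + t(e); consequently PI_w(G) ≤ n²m − Σ_{e∈E} t(e)². -/
import Mathlib


open Finset
open scoped Classical

/-- Number of vertices strictly closer to `u` than to `v`. -/
noncomputable def ncl {V : Type*} [Fintype V] (G : SimpleGraph V) (u v : V) : ℕ :=
  (Finset.univ.filter fun x => G.dist x u < G.dist x v).card

/-- Weighted vertex PI index: each edge `uv` contributes
`(deg u + deg v) * (n_u(e) + n_v(e))`; each edge is counted twice in the double sum. -/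
noncomputable def PIw {V : Type*} [Fintype V] (G : SimpleGraph V) : ℝ :=
  (∑ u, ∑ v, if G.Adj u v then
    (((G.degree u + G.degree v : ℕ) : ℝ) * ((ncl G u v + ncl G v u : ℕ) : ℝ)) else 0) / 2

/-- Number of triangles containing the edge `uv`, i.e. common neighbors of `u` and `v`. -/
noncomputable def te {V : Type*} [Fintype V] (G : SimpleGraph V) (u v : V) : ℕ :=
  (Finset.univ.filter fun w => G.Adj u w ∧ G.Adj v w).card

lemma ncl_add_te_le {V : Type*} [Fintype V] (G : SimpleGraph V) {u v : V} (h : G.Adj u v) :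
    ncl G u v + ncl G v u + te G u v ≤ Fintype.card V := by
  classical
  set A := (Finset.univ.filter fun x => G.dist x u < G.dist x v) with hA
  set B := (Finset.univ.filter fun x => G.dist x v < G.dist x u) with hB
  set C := (Finset.univ.filter fun w => G.Adj u w ∧ G.Adj v w) with hC
  have hAB : Disjoint A B := by
    rw [Finset.disjoint_left]
    intro a ha hb
    simp only [hA, hB, Finset.mem_filter] at ha hb
    omega
  have hABC : Disjoint (A ∪ B) C := by
    rw [Finset.disjoint_left]
    intro a ha hb
    simp only [hC, Finset.mem_filter] at hb
    have h1 : G.dist a u = 1 := by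
      rw [SimpleGraph.dist_eq_one_iff_adj]; exact hb.2.1.symm
    have h2 : G.dist a v = 1 := by
      rw [SimpleGraph.dist_eq_one_iff_adj]; exact hb.2.2.symm
    simp only [hA, hB, Finset.mem_union, Finset.mem_filter] at ha
    omega
  have : ncl G u v + ncl G v u + te G u v = ((A ∪ B) ∪ C).card := by
    rw [Finset.card_union_of_disjoint hABC, Finset.card_union_of_disjoint hAB]
    rfl
  rw [this]
  exact Finset.card_le_univ _

lemma deg_le_te {V : Type*} [Fintype V] (G : SimpleGraph V) (u v : V) :
    G.degree u + G.degree v ≤ Fintype.card V + te G u v := by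
  classical
  have h1 : G.degree u + G.degree v =
      (G.neighborFinset u ∪ G.neighborFinset v).card +
      (G.neighborFinset u ∩ G.neighborFinset v).card := by
    rw [Finset.card_union_add_card_inter]; rfl
  have h2 : (G.neighborFinset u ∩ G.neighborFinset v).card = te G u v := by
    congr 1
    ext w
    simp [te, SimpleGraph.mem_neighborFinset]
  rw [h1, h2]
  exact Nat.add_le_add_right (Finset.card_le_univ _) _

theorem PIw_triangle_edge_bounds {V : Type*} [Fintype V] (G : SimpleGraph V)
    (hconn : G.Connected) :
    (∀ u v, G.Adj u v →
      ((ncl G u v + ncl G v u : ℕ) : ℝ) ≤ (Fintype.card V : ℝ) - (te G u v : ℝ) ∧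
      ((G.degree u + G.degree v : ℕ) : ℝ) ≤ (Fintype.card V : ℝ) + (te G u v : ℝ)) ∧
    PIw G ≤ (Fintype.card V : ℝ) ^ 2 * (G.edgeFinset.card : ℝ) -
      (∑ u, ∑ v, if G.Adj u v then ((te G u v : ℝ)) ^ 2 else 0) / 2 := by
  classical
  have key : ∀ u v, G.Adj u v →
      ((ncl G u v + ncl G v u : ℕ) : ℝ) ≤ (Fintype.card V : ℝ) - (te G u v : ℝ) ∧
      ((G.degree u + G.degree v : ℕ) : ℝ) ≤ (Fintype.card V : ℝ) + (te G u v : ℝ) := by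
    intro u v h
    constructor
    · have := ncl_add_te_le G h
      push_cast
      have : (ncl G u v + ncl G v u + te G u v : ℝ) ≤ (Fintype.card V : ℝ) := by
        exact_mod_cast this
      linarith
    · have := deg_le_te G u v
      push_cast
      exact_mod_cast this
  refine ⟨key, ?_⟩
  have hterm : ∀ u v,
      (if G.Adj u v then
        (((G.degree u + G.degree v : ℕ) : ℝ) * ((ncl G u v + ncl G v u : ℕ) : ℝ)) else 0) ≤
      (if G.Adj u v then ((Fintype.card V : ℝ) ^ 2 - (te G u v : ℝ) ^ 2) else 0) := by
    intro u v
    by_cases h : G.Adj u v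
    · simp only [h, if_true]
      obtain ⟨h1, h2⟩ := key u v h
      have hc : (0 : ℝ) ≤ ((ncl G u v + ncl G v u : ℕ) : ℝ) := by positivity
      have hb : (0 : ℝ) ≤ (Fintype.card V : ℝ) + (te G u v : ℝ) := by positivity
      calc ((G.degree u + G.degree v : ℕ) : ℝ) * ((ncl G u v + ncl G v u : ℕ) : ℝ)
          ≤ ((Fintype.card V : ℝ) + (te G u v : ℝ)) * ((Fintype.card V : ℝ) - (te G u v : ℝ)) :=
            mul_le_mul h2 h1 hc hb
        _ = (Fintype.card V : ℝ) ^ 2 - (te G u v : ℝ) ^ 2 := by ring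
    · simp [h]
  have hsum : (∑ u, ∑ v, if G.Adj u v then
        (((G.degree u + G.degree v : ℕ) : ℝ) * ((ncl G u v + ncl G v u : ℕ) : ℝ)) else 0) ≤
      ∑ u, ∑ v, (if G.Adj u v then ((Fintype.card V : ℝ) ^ 2 - (te G u v : ℝ) ^ 2) else 0) := by
    apply Finset.sum_le_sum
    intro u _
    exact Finset.sum_le_sum fun v _ => hterm u v
  have hsplit : (∑ u, ∑ v, (if G.Adj u v then
        ((Fintype.card V : ℝ) ^ 2 - (te G u v : ℝ) ^ 2) else 0)) =
      (∑ u, ∑ v, (if G.Adj u v then ((Fintype.card V : ℝ) ^ 2) else 0)) -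
      (∑ u, ∑ v, (if G.Adj u v then ((te G u v : ℝ)) ^ 2 else 0)) := by
    rw [← Finset.sum_sub_distrib]
    apply Finset.sum_congr rfl
    intro u _
    rw [← Finset.sum_sub_distrib]
    apply Finset.sum_congr rfl
    intro v _
    by_cases h : G.Adj u v <;> simp [h]
  have hcount : (∑ u, ∑ v, (if G.Adj u v then ((Fintype.card V : ℝ) ^ 2) else 0)) =
      (Fintype.card V : ℝ) ^ 2 * (2 * (G.edgeFinset.card : ℝ)) := by
    have hd : ∀ u : V, (∑ v, (if G.Adj u v then ((Fintype.card V : ℝ) ^ 2) else 0)) =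
        (Fintype.card V : ℝ) ^ 2 * (G.degree u : ℝ) := by
      intro u
      rw [Finset.sum_ite, Finset.sum_const_zero, add_zero, Finset.sum_const, nsmul_eq_mul]
      rw [SimpleGraph.degree, SimpleGraph.neighborFinset_eq_filter]
      ring
    simp_rw [hd]
    rw [← Finset.mul_sum]
    congr 1
    have := SimpleGraph.sum_degrees_eq_twice_card_edges G
    rw [← Nat.cast_sum]
    rw [this]
    push_cast
    ring
  rw [PIw, div_le_iff₀ (by norm_num : (0:ℝ) < 2)]
  calc (∑ u, ∑ v, if G.Adj u v then
        (((G.degree u + G.degree v : ℕ) : ℝ) * ((ncl G u v + ncl G v u : ℕ) : ℝ)) else 0)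
      ≤ (∑ u, ∑ v, (if G.Adj u v then ((Fintype.card V : ℝ) ^ 2) else 0)) -
        (∑ u, ∑ v, (if G.Adj u v then ((te G u v : ℝ)) ^ 2 else 0)) := by
        rw [← hsplit]; exact hsum
    _ = (Fintype.card V : ℝ) ^ 2 * (2 * (G.edgeFinset.card : ℝ)) -
        (∑ u, ∑ v, (if G.Adj u v then ((te G u v : ℝ)) ^ 2 else 0)) := by rw [hcount]
    _ = ((Fintype.card V : ℝ) ^ 2 * (G.edgeFinset.card : ℝ) -
        (∑ u, ∑ v, if G.Adj u v then ((te G u v : ℝ)) ^ 2 else 0) / 2) * 2 := by ring
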